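/- Let G ∈ ℝ^{d×d} be symmetric positive definite, let H₁,…,H_k ∈ ℝ^{d×d} be symmetric, set S_α = G^{−1/2} H_α G^{−1/2}, let κ = κ(S₁,…,S_k), and fix ε > 0 and r > 0 with ε·r·κ < 1. Then for every n ∈ ℝ^k with ‖n‖₂ ≤ r, the determinant of the block-diagonal matrix M(n) = diag( G^{1/2}(I_d − ε Σ_α n^α S_α)² G^{1/2}, ε² I_k ) satisfies ε^{2k}·det(G)·(1 − ε r κ)^{2d} ≤ det(M(n)) ≤ ε^{2k}·det(G)·(1 + ε r κ)^{2d}. -/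

import Mathlib

open scoped BigOperators

/-- For symmetric matrices `S₁,…,S_k ∈ ℝ^{d×d}`,
`κ(S₁,…,S_k) = max_{‖v‖₂=1} (Σ_α (vᵀ S_α v)²)^{1/2}`. -/
noncomputable def kappa {d k : ℕ} (S : Fin k → Matrix (Fin d) (Fin d) ℝ) : ℝ :=
  ⨆ v : {v : Fin d → ℝ // ∑ i, v i ^ 2 = 1},
    Real.sqrt (∑ α, (dotProduct v.1 ((S α).mulVec v.1)) ^ 2)

/-- Port: `Matrix.PosSemidef.sqrt` is gone from Mathlib; restated with its old definition. -/
noncomputable def Matrix.PosSemidef.sqrt {n : Type*} [Fintype n] [DecidableEq n]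
    {A : Matrix n n ℝ} (hA : A.PosSemidef) : Matrix n n ℝ :=
  hA.1.eigenvectorUnitary.1 * Matrix.diagonal (Real.sqrt ∘ hA.1.eigenvalues) *
    (star hA.1.eigenvectorUnitary : Matrix n n ℝ)

/-- `S_α = G^{−1/2} H_α G^{−1/2}`, where `G^{1/2}` is the positive (semi)definite square root of
the positive definite matrix `G`. -/
noncomputable def Smat {d k : ℕ} (G : Matrix (Fin d) (Fin d) ℝ) (hG : G.PosDef)
    (H : Fin k → Matrix (Fin d) (Fin d) ℝ) (α : Fin k) : Matrix (Fin d) (Fin d) ℝ :=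
  hG.posSemidef.sqrt⁻¹ * H α * hG.posSemidef.sqrt⁻¹

/-- The `(d+k)×(d+k)` block-diagonal matrix
`M(n) = diag( G^{1/2}(I_d − ε Σ_α n^α S_α)² G^{1/2}, ε² I_k )`. -/
noncomputable def blockM {d k : ℕ} (G : Matrix (Fin d) (Fin d) ℝ) (hG : G.PosDef)
    (H : Fin k → Matrix (Fin d) (Fin d) ℝ) (ε : ℝ) (nv : Fin k → ℝ) :
    Matrix (Fin d ⊕ Fin k) (Fin d ⊕ Fin k) ℝ :=
  Matrix.fromBlocks
    (hG.posSemidef.sqrt *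
        ((1 : Matrix (Fin d) (Fin d) ℝ) - ε • ∑ α, nv α • Smat G hG H α) ^ 2 *
      hG.posSemidef.sqrt)
    0 0 (ε ^ 2 • (1 : Matrix (Fin k) (Fin k) ℝ))

/- ### Auxiliary lemmas -/

private lemma psd_sqrt_mul_self {n : Type*} [Fintype n] [DecidableEq n]
    {A : Matrix n n ℝ} (hA : A.PosSemidef) : hA.sqrt * hA.sqrt = A := by
  have hU : (star hA.1.eigenvectorUnitary : Matrix n n ℝ) * hA.1.eigenvectorUnitary.1 = 1 :=
    Matrix.UnitaryGroup.star_mul_self _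
  have hD : Matrix.diagonal (Real.sqrt ∘ hA.1.eigenvalues) *
      Matrix.diagonal (Real.sqrt ∘ hA.1.eigenvalues) =
      Matrix.diagonal (RCLike.ofReal ∘ hA.1.eigenvalues) := by
    rw [Matrix.diagonal_mul_diagonal]
    congr 1; funext i
    simp [Real.mul_self_sqrt (hA.eigenvalues_nonneg i)]
  conv_rhs => rw [hA.1.spectral_theorem, Unitary.conjStarAlgAut_apply]
  unfold Matrix.PosSemidef.sqrt
  simp only [Matrix.mul_assoc]
  rw [← Matrix.mul_assoc (star _ : Matrix n n ℝ) hA.1.eigenvectorUnitary.1, hU, Matrix.one_mul,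
    ← Matrix.mul_assoc _ _ (star _ : Matrix n n ℝ), hD]

private lemma psd_sqrt_isHermitian {n : Type*} [Fintype n] [DecidableEq n]
    {A : Matrix n n ℝ} (hA : A.PosSemidef) : hA.sqrt.IsHermitian := by
  unfold Matrix.PosSemidef.sqrt
  rw [Matrix.IsHermitian, Matrix.conjTranspose_mul, Matrix.conjTranspose_mul,
    Matrix.diagonal_conjTranspose, Matrix.star_eq_conjTranspose, Matrix.conjTranspose_conjTranspose,
    star_trivial, Matrix.mul_assoc]

private lemma abs_quadform_le {d : ℕ} (M : Matrix (Fin d) (Fin d) ℝ) (v : Fin d → ℝ)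
    (hv : ∑ i, v i ^ 2 = 1) :
    |dotProduct v (M.mulVec v)| ≤ ∑ i, ∑ j, |M i j| := by
  have hv1 : ∀ i, |v i| ≤ 1 := by
    intro i
    have h1 : v i ^ 2 ≤ 1 := by
      rw [← hv]
      exact Finset.single_le_sum (f := fun i => v i ^ 2) (fun _ _ => sq_nonneg _)
        (Finset.mem_univ i)
    exact (sq_le_one_iff_abs_le_one _).mp h1
  calc |dotProduct v (M.mulVec v)| = |∑ i, v i * ∑ j, M i j * v j| := by
        simp [dotProduct, Matrix.mulVec]
    _ ≤ ∑ i, |v i * ∑ j, M i j * v j| := Finset.abs_sum_le_sum_abs _ _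
    _ ≤ ∑ i, ∑ j, |M i j| := by
        apply Finset.sum_le_sum
        intro i _
        rw [abs_mul]
        calc |v i| * |∑ j, M i j * v j| ≤ 1 * ∑ j, |M i j| := by
              apply mul_le_mul (hv1 i) ?_ (abs_nonneg _) zero_le_one
              calc |∑ j, M i j * v j| ≤ ∑ j, |M i j * v j| := Finset.abs_sum_le_sum_abs _ _
                _ ≤ ∑ j, |M i j| := by
                    apply Finset.sum_le_sum
                    intro j _
                    rw [abs_mul]
                    calc |M i j| * |v j| ≤ |M i j| * 1 :=
                          mul_le_mul_of_nonneg_left (hv1 j) (abs_nonneg _)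
                      _ = |M i j| := mul_one _
          _ = ∑ j, |M i j| := one_mul _

private lemma le_kappa {d k : ℕ} (S : Fin k → Matrix (Fin d) (Fin d) ℝ)
    (v : Fin d → ℝ) (hv : ∑ i, v i ^ 2 = 1) :
    Real.sqrt (∑ α, (dotProduct v ((S α).mulVec v)) ^ 2) ≤ kappa S := by
  have hbdd : BddAbove (Set.range fun v : {v : Fin d → ℝ // ∑ i, v i ^ 2 = 1} =>
      Real.sqrt (∑ α, (dotProduct v.1 ((S α).mulVec v.1)) ^ 2)) := by
    refine ⟨Real.sqrt (∑ α, (∑ i, ∑ j, |S α i j|) ^ 2), ?_⟩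
    rintro x ⟨w, rfl⟩
    apply Real.sqrt_le_sqrt
    apply Finset.sum_le_sum
    intro α _
    have h1 := abs_quadform_le (S α) w.1 w.2
    calc (dotProduct w.1 ((S α).mulVec w.1)) ^ 2
        = |dotProduct w.1 ((S α).mulVec w.1)| ^ 2 := (sq_abs _).symm
      _ ≤ (∑ i, ∑ j, |S α i j|) ^ 2 := pow_le_pow_left₀ (abs_nonneg _) h1 2
  exact le_ciSup hbdd (⟨v, hv⟩ : {v : Fin d → ℝ // ∑ i, v i ^ 2 = 1})

private lemma dotProduct_sum' {d : ℕ} {ι : Type*} (s : Finset ι) (v : Fin d → ℝ)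
    (w : ι → Fin d → ℝ) :
    dotProduct v (∑ α ∈ s, w α) = ∑ α ∈ s, dotProduct v (w α) := by
  simp only [dotProduct, Finset.sum_apply, Finset.mul_sum]
  exact Finset.sum_comm

private lemma det_bounds_quadform {d : ℕ} (B : Matrix (Fin d) (Fin d) ℝ)
    (hB : B.IsHermitian) (a b : ℝ) (ha : 0 < a)
    (hq : ∀ v : Fin d → ℝ, ∑ i, v i ^ 2 = 1 →
      a ≤ dotProduct v (B.mulVec v) ∧ dotProduct v (B.mulVec v) ≤ b) :
    a ^ d ≤ B.det ∧ B.det ≤ b ^ d := by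
  have heig : ∀ i, a ≤ hB.eigenvalues i ∧ hB.eigenvalues i ≤ b := by
    intro i
    set w : Fin d → ℝ := ⇑(hB.eigenvectorBasis i) with hw
    have hnorm : ‖hB.eigenvectorBasis i‖ = 1 := hB.eigenvectorBasis.orthonormal.1 i
    have hunit : ∑ j, w j ^ 2 = 1 := by
      have h1 := EuclideanSpace.norm_eq (hB.eigenvectorBasis i)
      rw [hnorm] at h1
      have h2 : Real.sqrt (∑ j, w j ^ 2) = 1 := by
        simpa [Real.norm_eq_abs, sq_abs] using h1.symm
      exact Real.sqrt_eq_one.mp h2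
    have hev : B.mulVec w = hB.eigenvalues i • w := hB.mulVec_eigenvectorBasis i
    have hdp : dotProduct w (B.mulVec w) = hB.eigenvalues i := by
      rw [hev, dotProduct_smul, smul_eq_mul]
      have : dotProduct w w = 1 := by
        simpa [dotProduct, sq] using hunit
      rw [this, mul_one]
    rw [← hdp]
    exact hq w hunit
  have hdet : B.det = ∏ i, hB.eigenvalues i := by
    simpa using hB.det_eq_prod_eigenvalues
  constructor
  · calc a ^ d = ∏ _i : Fin d, a := by simp
      _ ≤ ∏ i, hB.eigenvalues i :=
          Finset.prod_le_prod (fun _ _ => ha.le) (fun i _ => (heig i).1)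
      _ = B.det := hdet.symm
  · calc B.det = ∏ i, hB.eigenvalues i := hdet
      _ ≤ ∏ _i : Fin d, b :=
          Finset.prod_le_prod (fun i _ => le_trans ha.le (heig i).1) (fun i _ => (heig i).2)
      _ = b ^ d := by simp

private lemma det_blockM {d k : ℕ} (G : Matrix (Fin d) (Fin d) ℝ) (hG : G.PosDef)
    (H : Fin k → Matrix (Fin d) (Fin d) ℝ) (ε : ℝ) (nv : Fin k → ℝ) :
    (blockM G hG H ε nv).det =
      ε ^ (2 * k) * G.det *
        (((1 : Matrix (Fin d) (Fin d) ℝ) - ε • ∑ α, nv α • Smat G hG H α).det) ^ 2 := by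
  have hsq : hG.posSemidef.sqrt.det * hG.posSemidef.sqrt.det = G.det := by
    rw [← Matrix.det_mul, psd_sqrt_mul_self hG.posSemidef]
  rw [blockM, Matrix.det_fromBlocks_zero₂₁, Matrix.det_mul, Matrix.det_mul, Matrix.det_pow,
    Matrix.det_smul, Matrix.det_one]
  simp only [Fintype.card_fin, mul_one]
  calc hG.posSemidef.sqrt.det *
        ((1 : Matrix (Fin d) (Fin d) ℝ) - ε • ∑ α, nv α • Smat G hG H α).det ^ 2 *
        hG.posSemidef.sqrt.det * (ε ^ 2) ^ k
      = (hG.posSemidef.sqrt.det * hG.posSemidef.sqrt.det) * (ε ^ 2) ^ k *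
        ((1 : Matrix (Fin d) (Fin d) ℝ) - ε • ∑ α, nv α • Smat G hG H α).det ^ 2 := by ring
    _ = _ := by rw [hsq, ← pow_mul]; ring

/-- If `ε·r·κ < 1`, then for every `n` with `‖n‖₂ ≤ r`,
`ε^{2k}·det(G)·(1 − εrκ)^{2d} ≤ det(M(n)) ≤ ε^{2k}·det(G)·(1 + εrκ)^{2d}`. -/
theorem blockM_det_bounds {d k : ℕ} (G : Matrix (Fin d) (Fin d) ℝ) (hG : G.PosDef)
    (H : Fin k → Matrix (Fin d) (Fin d) ℝ) (hH : ∀ α, (H α).IsSymm)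
    (ε r : ℝ) (hε : 0 < ε) (hr : 0 < r)
    (hcond : ε * r * kappa (Smat G hG H) < 1)
    (nv : Fin k → ℝ) (hnv : Real.sqrt (∑ α, nv α ^ 2) ≤ r) :
    ε ^ (2 * k) * G.det * (1 - ε * r * kappa (Smat G hG H)) ^ (2 * d) ≤
        (blockM G hG H ε nv).det ∧
      (blockM G hG H ε nv).det ≤
        ε ^ (2 * k) * G.det * (1 + ε * r * kappa (Smat G hG H)) ^ (2 * d) := by
  classical
  have hκ0 : 0 ≤ kappa (Smat G hG H) :=
    Real.iSup_nonneg fun _ => Real.sqrt_nonneg _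
  set κ := kappa (Smat G hG H) with hκdef
  set c := ε * r * κ with hcdef
  have hc0 : 0 ≤ c := by positivity
  have hc1 : c < 1 := hcond
  set B := (1 : Matrix (Fin d) (Fin d) ℝ) - ε • ∑ α, nv α • Smat G hG H α with hBdef
  -- symmetry of the S_α
  have hP : (hG.posSemidef.sqrt⁻¹).IsHermitian := (psd_sqrt_isHermitian hG.posSemidef).inv
  have hS : ∀ α, (Smat G hG H α).IsHermitian := by
    intro α
    have hHα : (H α).IsHermitian := by
      rw [Matrix.IsHermitian, Matrix.conjTranspose]
      ext i j; simpa using congrFun (congrFun (hH α).eq i) j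
    rw [Smat, Matrix.IsHermitian, Matrix.conjTranspose_mul, Matrix.conjTranspose_mul,
      hP.eq, hHα.eq, mul_assoc]
  have hBherm : B.IsHermitian := by
    rw [Matrix.IsHermitian, hBdef, Matrix.conjTranspose_sub, Matrix.conjTranspose_one,
      Matrix.conjTranspose_smul, Matrix.conjTranspose_sum]
    simp only [Matrix.conjTranspose_smul, fun α => (hS α).eq]
    simp
  -- quadratic form bounds
  have hquad : ∀ v : Fin d → ℝ, ∑ i, v i ^ 2 = 1 →
      1 - c ≤ dotProduct v (B.mulVec v) ∧ dotProduct v (B.mulVec v) ≤ 1 + c := by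
    intro v hv
    have hvv : dotProduct v v = 1 := by
      simpa [dotProduct, sq] using hv
    set q : ℝ := dotProduct v ((∑ α, nv α • Smat G hG H α).mulVec v) with hqdef
    have hq : q = ∑ α, nv α * dotProduct v ((Smat G hG H α).mulVec v) := by
      rw [hqdef]
      have h1 : (∑ α, nv α • Smat G hG H α).mulVec v
          = ∑ α, nv α • ((Smat G hG H α).mulVec v) := by
        ext i
        simp only [Matrix.mulVec, dotProduct, Finset.sum_apply, Pi.smul_apply,
          Matrix.sum_apply, Matrix.smul_apply, smul_eq_mul, Finset.sum_mul, Finset.mul_sum,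
          mul_assoc]
        exact Finset.sum_comm
      rw [h1, dotProduct_sum']
      simp [dotProduct_smul]
    have habsq : |q| ≤ r * κ := by
      have hcauchy := Finset.sum_mul_sq_le_sq_mul_sq Finset.univ nv
        (fun α => dotProduct v ((Smat G hG H α).mulVec v))
      have h2 : |q| ≤ Real.sqrt (∑ α, nv α ^ 2) *
          Real.sqrt (∑ α, (dotProduct v ((Smat G hG H α).mulVec v)) ^ 2) := by
        rw [← Real.sqrt_mul (by positivity), ← Real.sqrt_sq_eq_abs]
        apply Real.sqrt_le_sqrt
        rw [hq]
        exact hcauchy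
      refine le_trans h2 ?_
      exact mul_le_mul hnv (le_kappa _ v hv) (Real.sqrt_nonneg _) hr.le
    have hεq : |ε * q| ≤ c := by
      rw [abs_mul, abs_of_pos hε, hcdef, mul_assoc]
      exact mul_le_mul_of_nonneg_left habsq hε.le
    have hdp : dotProduct v (B.mulVec v) = 1 - ε * q := by
      rw [hBdef, Matrix.sub_mulVec, Matrix.one_mulVec, dotProduct_sub, hvv,
        Matrix.smul_mulVec, dotProduct_smul, smul_eq_mul, hqdef]
    rw [hdp]
    obtain ⟨h3, h4⟩ := abs_le.mp hεq
    constructor <;> linarith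
  obtain ⟨hlow, hhigh⟩ := det_bounds_quadform B hBherm (1 - c) (1 + c) (by linarith) hquad
  have hdetM := det_blockM G hG H ε nv
  rw [← hBdef] at hdetM
  have hGdet : (0 : ℝ) < G.det := hG.det_pos
  have hfac : (0 : ℝ) ≤ ε ^ (2 * k) * G.det := by positivity
  have hB0 : (0 : ℝ) ≤ B.det := le_trans (pow_nonneg (by linarith) d) hlow
  have e1 : (1 - c) ^ (2 * d) = ((1 - c) ^ d) ^ 2 := by rw [mul_comm, pow_mul]
  have e2 : (1 + c) ^ (2 * d) = ((1 + c) ^ d) ^ 2 := by rw [mul_comm, pow_mul]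
  constructor
  · rw [hdetM, e1]
    apply mul_le_mul_of_nonneg_left _ hfac
    exact pow_le_pow_left₀ (pow_nonneg (by linarith) d) hlow 2
  · rw [hdetM, e2]
    apply mul_le_mul_of_nonneg_left _ hfac
    exact pow_le_pow_left₀ hB0 hhigh 2
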